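/- arXiv:1609.01166 — 3 statements merged into one kernel-verified Lean document; each statement's English description precedes it below -/
import Mathlib

section
/- Let λ = (λ_1 ≥ λ_2 ≥ ... ≥ λ_n = 0) be a weakly decreasing sequence of nonnegative integers. The set GT_Z(λ) of integral Gelfand-Tsetlin patterns with top row λ satisfies the Minkowski sum property: GT_Z(λ) + GT_Z(μ) = GT_Z(λ + μ) for any two such sequences λ, μ (where patterns are added entrywise and λ+μ is added entrywise). -/
/-- `x` is an integral Gelfand-Tsetlin pattern for `SL_n` with top row `lam`:
`x 0 j = lam j` for `1 ≤ j ≤ n`, and the interlacing conditions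
`x (i+1) j ≤ x i j` and `x i (j+1) ≤ x (i+1) j` for all valid indices. -/
def IsGTPattern (n : ℕ) (lam : ℕ → ℤ) (x : ℕ → ℕ → ℤ) : Prop :=
  (∀ j, 1 ≤ j → j ≤ n → x 0 j = lam j) ∧
  (∀ i j, i + 1 ≤ n - 1 → 1 ≤ j → j ≤ n - (i + 1) →
    x (i + 1) j ≤ x i j ∧ x i (j + 1) ≤ x (i + 1) j)

/-- Greedy construction of the `λ`-component of a GT pattern `z` for `λ + μ`. -/
def buildX (lam : ℕ → ℤ) (z : ℕ → ℕ → ℤ) : ℕ → ℕ → ℤ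
  | 0 => lam
  | (i+1) => fun j => min (buildX lam z i j) (buildX lam z i (j+1) + z (i+1) j - z i (j+1))

lemma buildX_mono (n : ℕ) (lam mu : ℕ → ℤ) (z : ℕ → ℕ → ℤ)
    (hz : IsGTPattern n (fun j => lam j + mu j) z)
    (hlam_dec : ∀ j, 1 ≤ j → j < n → lam (j + 1) ≤ lam j)
    (hmu_dec : ∀ j, 1 ≤ j → j < n → mu (j + 1) ≤ mu j) :
    ∀ i j, 1 ≤ j → j + 1 ≤ n - i →
      buildX lam z i (j+1) ≤ buildX lam z i j ∧
      z i (j+1) - buildX lam z i (j+1) ≤ z i j - buildX lam z i j := by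
  intro i
  induction i with
  | zero =>
    intro j hj hjn
    have h1 : z 0 j = lam j + mu j := hz.1 j hj (by omega)
    have h2 : z 0 (j+1) = lam (j+1) + mu (j+1) := hz.1 (j+1) (by omega) (by omega)
    have := hlam_dec j hj (by omega)
    have := hmu_dec j hj (by omega)
    constructor
    · simpa [buildX] using hlam_dec j hj (by omega)
    · simp only [buildX]; omega
  | succ i ih =>
    intro j hj hjn
    have hzj := hz.2 i j (by omega) hj (by omega)
    have hzj1 := hz.2 i (j+1) (by omega) (by omega) (by omega)
    have ihj := ih j hj (by omega)
    have ihj1 := ih (j+1) (by omega) (by omega)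
    simp only [show j+1+1 = j+2 from rfl] at ihj1 hzj1
    simp only [buildX] at *
    constructor
    · -- x (i+1) (j+1) ≤ x i (j+1) ≤ x (i+1) j
      have h1 : min (buildX lam z i (j+1)) (buildX lam z i (j+2) + z (i+1) (j+1) - z i (j+2))
          ≤ buildX lam z i (j+1) := min_le_left _ _
      have h2 : buildX lam z i (j+1) ≤
          min (buildX lam z i j) (buildX lam z i (j+1) + z (i+1) j - z i (j+1)) := by
        apply le_min
        · exact ihj.1
        · omega
      exact le_trans h1 h2
    · -- y (i+1) (j+1) ≤ y i (j+1) ≤ y (i+1) j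
      have h1 : z (i+1) (j+1) -
          min (buildX lam z i (j+1)) (buildX lam z i (j+2) + z (i+1) (j+1) - z i (j+2))
          ≤ z i (j+1) - buildX lam z i (j+1) := by
        rcases le_total (buildX lam z i (j+1))
            (buildX lam z i (j+2) + z (i+1) (j+1) - z i (j+2)) with h | h
        · rw [min_eq_left h]; omega
        · rw [min_eq_right h]
          have := ihj1.2
          omega
      have h2 : z i (j+1) - buildX lam z i (j+1) ≤ z (i+1) j -
          min (buildX lam z i j) (buildX lam z i (j+1) + z (i+1) j - z i (j+1)) := by
        have : min (buildX lam z i j) (buildX lam z i (j+1) + z (i+1) j - z i (j+1))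
            ≤ buildX lam z i (j+1) + z (i+1) j - z i (j+1) := min_le_right _ _
        omega
      exact le_trans h1 h2

lemma buildX_interlace (n : ℕ) (lam mu : ℕ → ℤ) (z : ℕ → ℕ → ℤ)
    (hz : IsGTPattern n (fun j => lam j + mu j) z)
    (hlam_dec : ∀ j, 1 ≤ j → j < n → lam (j + 1) ≤ lam j)
    (hmu_dec : ∀ j, 1 ≤ j → j < n → mu (j + 1) ≤ mu j) :
    ∀ i j, i + 1 ≤ n - 1 → 1 ≤ j → j ≤ n - (i + 1) →
      (buildX lam z (i+1) j ≤ buildX lam z i j ∧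
        buildX lam z i (j+1) ≤ buildX lam z (i+1) j) ∧
      (z (i+1) j - buildX lam z (i+1) j ≤ z i j - buildX lam z i j ∧
        z i (j+1) - buildX lam z i (j+1) ≤ z (i+1) j - buildX lam z (i+1) j) := by
  intro i j hi hj hjn
  have hzj := hz.2 i j hi hj hjn
  have hmono := buildX_mono n lam mu z hz hlam_dec hmu_dec i j hj (by omega)
  simp only [buildX]
  refine ⟨⟨min_le_left _ _, le_min hmono.1 (by omega)⟩, ?_, ?_⟩
  · rcases le_total (buildX lam z i j)
        (buildX lam z i (j+1) + z (i+1) j - z i (j+1)) with h | h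
    · rw [min_eq_left h]; omega
    · rw [min_eq_right h]; have := hmono.2; omega
  · have : min (buildX lam z i j) (buildX lam z i (j+1) + z (i+1) j - z i (j+1))
        ≤ buildX lam z i (j+1) + z (i+1) j - z i (j+1) := min_le_right _ _
    omega

/-- Minkowski sum property of integral Gelfand-Tsetlin patterns:
`GT_ℤ(λ) + GT_ℤ(μ) = GT_ℤ(λ + μ)` for weakly decreasing nonnegative integer
sequences `λ, μ` with `λ_n = μ_n = 0`. -/
theorem stmt5 (n : ℕ) (lam mu : ℕ → ℤ)
    (hlam_dec : ∀ j, 1 ≤ j → j < n → lam (j + 1) ≤ lam j)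
    (hlam_nonneg : ∀ j, 1 ≤ j → j ≤ n → 0 ≤ lam j)
    (hlam_last : lam n = 0)
    (hmu_dec : ∀ j, 1 ≤ j → j < n → mu (j + 1) ≤ mu j)
    (hmu_nonneg : ∀ j, 1 ≤ j → j ≤ n → 0 ≤ mu j)
    (hmu_last : mu n = 0) :
    {z : ℕ → ℕ → ℤ | ∃ x y, IsGTPattern n lam x ∧ IsGTPattern n mu y ∧ z = x + y} =
    {z : ℕ → ℕ → ℤ | IsGTPattern n (fun j => lam j + mu j) z} := by
  ext z
  simp only [Set.mem_setOf_eq]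
  constructor
  · rintro ⟨x, y, hx, hy, rfl⟩
    constructor
    · intro j hj hjn
      simp [Pi.add_apply, hx.1 j hj hjn, hy.1 j hj hjn]
    · intro i j hi hj hjn
      have h1 := hx.2 i j hi hj hjn
      have h2 := hy.2 i j hi hj hjn
      constructor <;> simp only [Pi.add_apply] <;> omega
  · intro hz
    refine ⟨buildX lam z, fun i j => z i j - buildX lam z i j, ?_, ?_, ?_⟩
    · constructor
      · intro j hj hjn; simp [buildX]
      · intro i j hi hj hjn
        exact (buildX_interlace n lam mu z hz hlam_dec hmu_dec i j hi hj hjn).1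
    · constructor
      · intro j hj hjn
        have := hz.1 j hj hjn
        simp only [buildX] at *
        omega
      · intro i j hi hj hjn
        exact (buildX_interlace n lam mu z hz hlam_dec hmu_dec i j hi hj hjn).2
    · funext i j
      simp [Pi.add_apply]
end

section
/- The monoid Γ_GT = ∪_{λ dominant} {λ} × GT_Z(λ) ⊂ Λ⁺ × Z^M is finitely generated and saturated (i.e. if k·γ ∈ Γ_GT for some positive integer k and γ in the ambient lattice with first coordinate dominant, then γ ∈ Γ_GT); in particular it is generated by the elements (ω_i, GT_Z(ω_i)) as ω_i ranges over the fundamental weights. -/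
/-- Top row of the Gelfand-Tsetlin pattern determined by a dominant weight
`lam ∈ ℕ^{n-1}` of `SL_n`: the (0-indexed) column `j` entry is the partial sum
`λ_{j+1} + ⋯ + λ_{n-1}` (last entry `0`). -/
def gtTop (n : ℕ) (lam : Fin (n - 1) → ℤ) (j : Fin n) : ℤ :=
  ∑ t : Fin (n - 1), if (j : ℕ) ≤ (t : ℕ) then lam t else 0

/-- `x` is an integral Gelfand-Tsetlin pattern with top row given by the dominant
weight `lam`, realized in `ℤ^{n×n}` with entries outside the triangle set to `0`. -/
def GTZmem (n : ℕ) (hn : 0 < n) (lam : Fin (n - 1) → ℤ) (x : Fin n → Fin n → ℤ) : Prop :=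
  (∀ j : Fin n, x ⟨0, hn⟩ j = gtTop n lam j) ∧
  (∀ i j : Fin n, n ≤ (i : ℕ) + (j : ℕ) → x i j = 0) ∧
  (∀ i j : Fin n, ∀ h : (i : ℕ) + 1 + (j : ℕ) < n,
    x ⟨(i : ℕ) + 1, by omega⟩ j ≤ x i j ∧
    x i ⟨(j : ℕ) + 1, by omega⟩ ≤ x ⟨(i : ℕ) + 1, by omega⟩ j)

/-- The Gelfand-Tsetlin monoid `Γ_GT = ⋃_{λ dominant} {λ} × GT_ℤ(λ)`. -/
def GammaGT (n : ℕ) (hn : 0 < n) : Set ((Fin (n - 1) → ℤ) × (Fin n → Fin n → ℤ)) :=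
  {p | (∀ t, 0 ≤ p.1 t) ∧ GTZmem n hn p.1 p.2}


lemma gtTop_sub (n : ℕ) (a b : Fin (n-1) → ℤ) (j : Fin n) :
    gtTop n (fun t => a t - b t) j = gtTop n a j - gtTop n b j := by
  unfold gtTop
  rw [← Finset.sum_sub_distrib]
  refine Finset.sum_congr rfl fun t _ => ?_
  split <;> simp

lemma gtTop_smul (n : ℕ) (k : ℕ) (a : Fin (n-1) → ℤ) (j : Fin n) :
    gtTop n (fun t => (k : ℤ) * a t) j = (k : ℤ) * gtTop n a j := by
  unfold gtTop
  rw [Finset.mul_sum]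
  refine Finset.sum_congr rfl fun t _ => ?_
  split <;> simp

lemma gtTop_step (n : ℕ) (lam : Fin (n-1) → ℤ) (t : Fin (n-1)) :
    gtTop n lam ⟨t, by have := t.isLt; omega⟩ - gtTop n lam ⟨(t:ℕ)+1, by have := t.isLt; omega⟩ = lam t := by
  unfold gtTop
  rw [← Finset.sum_sub_distrib]
  rw [show lam t = ∑ s : Fin (n-1), if s = t then lam s else 0 by
    rw [Finset.sum_ite_eq' Finset.univ t lam]; simp]
  refine Finset.sum_congr rfl fun s _ => ?_
  simp only []
  have hst : (s = t) ↔ ((s:ℕ) = (t:ℕ)) := by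
    constructor
    · intro h; rw [h]
    · intro h; exact Fin.ext h
  split_ifs with h1 h2 h3 h4 h5 <;> simp_all <;> omega

lemma gtTop_last (n : ℕ) (hn : 0 < n) (lam : Fin (n-1) → ℤ) :
    gtTop n lam ⟨n-1, by omega⟩ = 0 := by
  unfold gtTop
  refine Finset.sum_eq_zero fun t _ => ?_
  rw [if_neg]
  have := t.isLt
  simp only [] 
  omega

lemma gtTop_nonneg (n : ℕ) (lam : Fin (n-1) → ℤ) (hl : ∀ t, 0 ≤ lam t) (j : Fin n) :
    0 ≤ gtTop n lam j := by
  refine Finset.sum_nonneg fun t _ => ?_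
  split
  · exact hl t
  · exact le_refl 0

lemma gtTop_le_zero (n : ℕ) (hn : 0 < n) (lam : Fin (n-1) → ℤ) (hl : ∀ t, 0 ≤ lam t) (j : Fin n) :
    gtTop n lam j ≤ gtTop n lam ⟨0, hn⟩ := by
  refine Finset.sum_le_sum fun t _ => ?_
  simp only [show ((⟨0,hn⟩:Fin n):ℕ) = 0 from rfl]
  split
  · split
    · exact le_refl _
    · omega
  · split
    · exact hl t
    · exact le_refl 0

lemma gtTop_zero_eq_sum (n : ℕ) (hn : 0 < n) (lam : Fin (n-1) → ℤ) :
    gtTop n lam ⟨0, hn⟩ = ∑ t, lam t := by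
  unfold gtTop
  refine Finset.sum_congr rfl fun t _ => ?_
  rw [if_pos]
  exact Nat.zero_le _

lemma gtTop_of_diff (n : ℕ) (hn : 0 < n) (g : Fin n → ℤ) (hg : g ⟨n-1, by omega⟩ = 0) :
    ∀ (d : ℕ) (j : Fin n), n - 1 - (j:ℕ) ≤ d →
      gtTop n (fun t => g ⟨t, by have := t.isLt; omega⟩ - g ⟨(t:ℕ)+1, by have := t.isLt; omega⟩) j = g j := by
  intro d
  induction d with
  | zero =>
    intro j hj
    have hj' : (j:ℕ) = n - 1 := by have := j.isLt; omega
    have : j = ⟨n-1, by omega⟩ := Fin.ext hj'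
    rw [this, gtTop_last n hn _, hg]
  | succ d ih =>
    intro j hj
    by_cases hlast : (j:ℕ) = n - 1
    · have : j = ⟨n-1, by omega⟩ := Fin.ext hlast
      rw [this, gtTop_last n hn _, hg]
    · have hjlt : (j:ℕ) < n - 1 := by have := j.isLt; omega
      have hstep := gtTop_step n (fun t => g ⟨t, by have := t.isLt; omega⟩ - g ⟨(t:ℕ)+1, by have := t.isLt; omega⟩) ⟨(j:ℕ), hjlt⟩
      have hih := ih ⟨(j:ℕ)+1, by omega⟩ (by simp; omega)
      have hjeq : (⟨((⟨(j:ℕ), hjlt⟩ : Fin (n-1)) : ℕ), by have := hjlt; omega⟩ : Fin n) = j := Fin.ext rfl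
      rw [hjeq] at hstep
      simp only [] at hstep hih ⊢
      omega

lemma entry_nonneg (n : ℕ) (hn : 0 < n) (lam : Fin (n-1) → ℤ) (x : Fin n → Fin n → ℤ)
    (hl : ∀ t, 0 ≤ lam t) (hx : GTZmem n hn lam x) : ∀ i j : Fin n, 0 ≤ x i j := by
  obtain ⟨h1, h2, h3⟩ := hx
  have key : ∀ i : ℕ, ∀ hi : i < n, ∀ j : Fin n, 0 ≤ x ⟨i, hi⟩ j := by
    intro i
    induction i with
    | zero => intro hi j; rw [h1 j]; exact gtTop_nonneg n lam hl j
    | succ i ih =>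
      intro hi j
      by_cases hout : n ≤ (i+1) + (j:ℕ)
      · rw [h2 ⟨i+1, hi⟩ j hout]
      · push_neg at hout
        have hi' : i < n := by omega
        have hjj : (j:ℕ) + 1 < n := by omega
        have := (h3 ⟨i, hi'⟩ j (by simpa using hout)).2
        have h0 := ih hi' ⟨(j:ℕ)+1, hjj⟩
        simp only [] at this ⊢
        calc (0:ℤ) ≤ x ⟨i, hi'⟩ ⟨(j:ℕ)+1, hjj⟩ := h0
          _ ≤ x ⟨i+1, hi⟩ j := this
  intro i j
  have : i = ⟨(i:ℕ), i.isLt⟩ := Fin.ext rfl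
  rw [this]; exact key i i.isLt j

lemma entry_le (n : ℕ) (hn : 0 < n) (lam : Fin (n-1) → ℤ) (x : Fin n → Fin n → ℤ)
    (hl : ∀ t, 0 ≤ lam t) (hx : GTZmem n hn lam x) : ∀ i j : Fin n, x i j ≤ x ⟨0, hn⟩ ⟨0, hn⟩ := by
  obtain ⟨h1, h2, h3⟩ := hx
  have htop : ∀ j : Fin n, x ⟨0,hn⟩ j ≤ x ⟨0,hn⟩ ⟨0,hn⟩ := by
    intro j; rw [h1 j, h1 ⟨0,hn⟩]; exact gtTop_le_zero n hn lam hl j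
  have key : ∀ i : ℕ, ∀ hi : i < n, ∀ j : Fin n, x ⟨i, hi⟩ j ≤ x ⟨0,hn⟩ ⟨0,hn⟩ := by
    intro i
    induction i with
    | zero => intro hi j; exact htop j
    | succ i ih =>
      intro hi j
      by_cases hout : n ≤ (i+1) + (j:ℕ)
      · rw [h2 ⟨i+1, hi⟩ j hout]
        have := entry_nonneg n hn lam x hl ⟨h1, h2, h3⟩ ⟨0,hn⟩ ⟨0,hn⟩
        exact this
      · push_neg at hout
        have hi' : i < n := by omega
        have := (h3 ⟨i, hi'⟩ j (by simpa using hout)).1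
        exact le_trans this (ih hi' j)
  intro i j
  have : i = ⟨(i:ℕ), i.isLt⟩ := Fin.ext rfl
  rw [this]; exact key i i.isLt j

def Sfund (n : ℕ) (hn : 0 < n) : Set ((Fin (n - 1) → ℤ) × (Fin n → Fin n → ℤ)) :=
  {p ∈ GammaGT n hn | ∃ i : Fin (n - 1), p.1 = fun j => if j = i then 1 else 0}

lemma ind_mono {a b : ℤ} (h : a ≤ b) :
    (if 1 ≤ a then (1:ℤ) else 0) ≤ (if 1 ≤ b then 1 else 0) := by split_ifs <;> omega

lemma sub_ind_mono {a b : ℤ} (ha : 0 ≤ a) (h : a ≤ b) :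
    a - (if 1 ≤ a then (1:ℤ) else 0) ≤ b - (if 1 ≤ b then 1 else 0) := by split_ifs <;> omega

lemma eq_zero_of_x00 (n : ℕ) (hn : 0 < n) (p : (Fin (n - 1) → ℤ) × (Fin n → Fin n → ℤ))
    (hp : p ∈ GammaGT n hn) (h0 : p.2 ⟨0,hn⟩ ⟨0,hn⟩ ≤ 0) : p = 0 := by
  obtain ⟨lam, x⟩ := p
  obtain ⟨hl, hx⟩ := hp
  have hnn := entry_nonneg n hn lam x hl hx
  have hle := entry_le n hn lam x hl hx
  have hx00 : x ⟨0,hn⟩ ⟨0,hn⟩ = 0 := le_antisymm h0 (hnn _ _)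
  have hlam : ∀ t, lam t = 0 := by
    have hsum : ∑ t, lam t = 0 := by
      rw [← gtTop_zero_eq_sum n hn lam, ← hx.1 ⟨0,hn⟩]; exact hx00
    intro t
    exact (Finset.sum_eq_zero_iff_of_nonneg (fun t _ => hl t)).mp hsum t (Finset.mem_univ t)
  have hxz : ∀ i j, x i j = 0 := fun i j =>
    le_antisymm (le_trans (hle i j) (le_of_eq hx00)) (hnn i j)
  ext t
  · exact hlam t
  · exact hxz _ _

lemma mem_closure_fund (n : ℕ) (hn : 0 < n) :
    ∀ (N : ℕ) (p : (Fin (n - 1) → ℤ) × (Fin n → Fin n → ℤ)), p ∈ GammaGT n hn →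
      (p.2 ⟨0,hn⟩ ⟨0,hn⟩).toNat ≤ N → p ∈ AddSubmonoid.closure (Sfund n hn) := by
  intro N
  induction N with
  | zero =>
    intro p hp h0
    have : p = 0 := eq_zero_of_x00 n hn p hp (by omega)
    rw [this]; exact zero_mem _
  | succ N ih =>
    intro p hp hN
    by_cases hpos : p.2 ⟨0,hn⟩ ⟨0,hn⟩ ≤ 0
    · rw [eq_zero_of_x00 n hn p hp hpos]; exact zero_mem _
    push_neg at hpos
    obtain ⟨lam, x⟩ := p
    obtain ⟨hl, h1, h2, h3⟩ := hp
    simp only [] at hpos hN ⊢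
    replace hl : ∀ t, 0 ≤ lam t := hl
    replace h1 : ∀ j : Fin n, x ⟨0, hn⟩ j = gtTop n lam j := h1
    replace h2 : ∀ i j : Fin n, n ≤ (i:ℕ) + (j:ℕ) → x i j = 0 := h2
    replace h3 : ∀ i j : Fin n, ∀ h : (i:ℕ)+1+(j:ℕ) < n,
        x ⟨(i:ℕ)+1, by omega⟩ j ≤ x i j ∧ x i ⟨(j:ℕ)+1, by omega⟩ ≤ x ⟨(i:ℕ)+1, by omega⟩ j := h3
    have hpos1 : (1:ℤ) ≤ x ⟨0,hn⟩ ⟨0,hn⟩ := by omega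
    set f : Fin n → ℤ := fun j => if 1 ≤ x ⟨0,hn⟩ j then 1 else 0 with hf
    set y : Fin n → Fin n → ℤ := fun i j => if 1 ≤ x i j then 1 else 0 with hy
    set mu : Fin (n-1) → ℤ :=
      fun t => f ⟨t, by have := t.isLt; omega⟩ - f ⟨(t:ℕ)+1, by have := t.isLt; omega⟩ with hmu
    have hnn := entry_nonneg n hn lam x hl ⟨h1, h2, h3⟩
    -- top row values via gtTop
    have hstep : ∀ t : Fin (n-1),
        x ⟨0,hn⟩ ⟨t, by have := t.isLt; omega⟩ - x ⟨0,hn⟩ ⟨(t:ℕ)+1, by have := t.isLt; omega⟩ = lam t := by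
      intro t
      have a := h1 ⟨(t:ℕ), by have := t.isLt; omega⟩
      have b := h1 ⟨(t:ℕ)+1, by have := t.isLt; omega⟩
      have c := gtTop_step n lam t
      omega
    have hflast : f ⟨n-1, by omega⟩ = 0 := by
      rw [hf]
      simp only []
      rw [h1, gtTop_last n hn lam]
      norm_num
    have hgt : ∀ j, gtTop n mu j = f j := by
      intro j
      exact gtTop_of_diff n hn f hflast n j (by omega)
    have hmunn : ∀ t, 0 ≤ mu t := by
      intro t
      have hm := hstep t
      have := hl t
      simp only [hmu, hf]
      split_ifs <;> omega
    have hmule : ∀ t, mu t ≤ lam t := by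
      intro t
      have hm := hstep t
      have := hl t
      have h1' := hnn ⟨0,hn⟩ ⟨t, by have := t.isLt; omega⟩
      have h2' := hnn ⟨0,hn⟩ ⟨(t:ℕ)+1, by have := t.isLt; omega⟩
      simp only [hmu, hf]
      split_ifs <;> omega
    -- q ∈ Sfund
    have hqGamma : (mu, y) ∈ GammaGT n hn := by
      refine ⟨hmunn, ?_, ?_, ?_⟩
      · intro j; exact (hgt j).symm
      · intro i j hij
        simp only [hy]
        rw [h2 i j hij]
        norm_num
      · intro i j h
        exact ⟨ind_mono (h3 i j h).1, ind_mono (h3 i j h).2⟩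
    have hsummu : ∑ t, mu t = 1 := by
      rw [← gtTop_zero_eq_sum n hn mu, hgt ⟨0,hn⟩, hf]
      simp only []
      rw [if_pos hpos1]
    have hmule1 : ∀ t, mu t ≤ 1 := by
      intro t
      simp only [hmu, hf]
      split_ifs <;> omega
    have hex : ∃ i : Fin (n-1), mu = fun j => if j = i then 1 else 0 := by
      have : ∃ i, mu i ≠ 0 := by
        by_contra hc
        push_neg at hc
        rw [Finset.sum_eq_zero (fun t _ => hc t)] at hsummu
        omega
      obtain ⟨i, hi⟩ := this
      have hmui : mu i = 1 := by have := hmunn i; have := hmule1 i; omega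
      have hrest : ∀ t ∈ Finset.univ.erase i, mu t = 0 := by
        have hsplit := Finset.add_sum_erase Finset.univ mu (Finset.mem_univ i)
        rw [hsummu, hmui] at hsplit
        have : ∑ t ∈ Finset.univ.erase i, mu t = 0 := by omega
        exact fun t ht =>
          (Finset.sum_eq_zero_iff_of_nonneg (fun t _ => hmunn t)).mp this t ht
      refine ⟨i, funext fun t => ?_⟩
      by_cases ht : t = i
      · rw [ht, if_pos rfl, hmui]
      · rw [if_neg ht]
        exact hrest t (Finset.mem_erase.mpr ⟨ht, Finset.mem_univ t⟩)
    have hqS : (mu, y) ∈ Sfund n hn := ⟨hqGamma, hex⟩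
    -- r ∈ GammaGT
    have hrGamma : ((fun t => lam t - mu t, fun i j => x i j - y i j) :
        (Fin (n - 1) → ℤ) × (Fin n → Fin n → ℤ)) ∈ GammaGT n hn := by
      refine ⟨fun t => by have := hmule t; simp only []; omega, ?_, ?_, ?_⟩
      · intro j
        simp only []
        rw [gtTop_sub n lam mu j, ← h1 j, hgt j]
      · intro i j hij
        simp only [hy]
        rw [h2 i j hij]
        norm_num
      · intro i j h
        constructor
        · exact sub_ind_mono (hnn _ _) (h3 i j h).1
        · exact sub_ind_mono (hnn _ _) (h3 i j h).2
    have hsum : (lam, x) = (mu, y) + (fun t => lam t - mu t, fun i j => x i j - y i j) := by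
      ext t
      · simp only [Prod.fst_add, Pi.add_apply]; ring
      · simp only [Prod.snd_add, Pi.add_apply]; ring
    have hmeas : (((fun t => lam t - mu t, fun i j => x i j - y i j) :
        (Fin (n - 1) → ℤ) × (Fin n → Fin n → ℤ)).2 ⟨0,hn⟩ ⟨0,hn⟩).toNat ≤ N := by
      simp only [hy]
      rw [if_pos hpos1]
      omega
    rw [hsum]
    exact add_mem (AddSubmonoid.subset_closure hqS) (ih _ hrGamma hmeas)

lemma sfund_finite (n : ℕ) (hn : 0 < n) : (Sfund n hn).Finite := by
  have hsub : Sfund n hn ⊆ Set.range (fun q : (Fin (n-1) → Bool) × (Fin n → Fin n → Bool) =>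
      ((fun t => if q.1 t then (1:ℤ) else 0, fun i j => if q.2 i j then (1:ℤ) else 0) :
        (Fin (n - 1) → ℤ) × (Fin n → Fin n → ℤ))) := by
    rintro ⟨lam, x⟩ ⟨⟨hl, hx⟩, i, hp1⟩
    replace hp1 : lam = fun j => if j = i then (1:ℤ) else 0 := hp1
    have hx00 : x ⟨0,hn⟩ ⟨0,hn⟩ = 1 := by
      have hthis : x ⟨0,hn⟩ ⟨0,hn⟩ = ∑ t, lam t := by
        have := hx.1 ⟨0,hn⟩
        rw [gtTop_zero_eq_sum n hn] at this
        exact this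
      rw [hthis, hp1]
      rw [Finset.sum_ite_eq' Finset.univ i (fun _ => (1:ℤ))]
      simp
    have hnn := entry_nonneg n hn lam x hl hx
    have hle := entry_le n hn lam x hl hx
    refine ⟨(fun t => decide (lam t = 1), fun i j => decide (x i j = 1)), ?_⟩
    refine Prod.ext ?_ ?_
    · funext t
      simp only []
      by_cases h : lam t = 1
      · simp [h]
      · have : lam t = 0 := by
          rw [hp1] at h ⊢
          simp only [] at h ⊢
          split_ifs at h ⊢ with h2
          · exact absurd rfl h
          · rfl
        simp [h, this]
    · funext a b
      simp only []
      have h1 := hnn a b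
      have h2 := le_trans (hle a b) (le_of_eq hx00)
      by_cases h : x a b = 1
      · simp [h]
      · have : x a b = 0 := by omega
        simp [h, this]
  exact (Set.finite_range _).subset hsub

lemma sat (n : ℕ) (hn : 0 < n) :
    ∀ (k : ℕ) (p : (Fin (n - 1) → ℤ) × (Fin n → Fin n → ℤ)),
      0 < k → (∀ t, 0 ≤ p.1 t) → k • p ∈ GammaGT n hn → p ∈ GammaGT n hn := by
  rintro k ⟨lam, x⟩ hk hdom hmem
  have hk0 : (0:ℤ) < (k:ℤ) := by exact_mod_cast hk
  have hkne : ((k:ℤ)) ≠ 0 := ne_of_gt hk0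
  obtain ⟨hl', h1', h2', h3'⟩ := hmem
  have e1 : ∀ i j : Fin n, (k • ((lam, x) : (Fin (n - 1) → ℤ) × (Fin n → Fin n → ℤ))).2 i j
      = (k:ℤ) * x i j := by
    intro i j
    show k • (x i j) = (k:ℤ) * x i j
    rw [nsmul_eq_mul]
  have e2 : ∀ j, gtTop n ((k • ((lam, x) : (Fin (n - 1) → ℤ) × (Fin n → Fin n → ℤ))).1) j
      = (k:ℤ) * gtTop n lam j := by
    intro j
    rw [show (k • ((lam, x) : (Fin (n - 1) → ℤ) × (Fin n → Fin n → ℤ))).1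
        = fun t => (k:ℤ) * lam t from funext fun t => by
          show k • (lam t) = (k:ℤ) * lam t
          rw [nsmul_eq_mul]]
    exact gtTop_smul n k lam j
  refine ⟨hdom, ?_, ?_, ?_⟩
  · intro j
    have := h1' j
    rw [e1, e2] at this
    exact mul_left_cancel₀ hkne this
  · intro i j hij
    have := h2' i j hij
    rw [e1] at this
    rcases mul_eq_zero.mp this with h | h
    · exact absurd h hkne
    · exact h
  · intro i j h
    have hpair := h3' i j h
    simp only [e1] at hpair
    show x ⟨(i:ℕ)+1, by omega⟩ j ≤ x i j ∧ x i ⟨(j:ℕ)+1, by omega⟩ ≤ x ⟨(i:ℕ)+1, by omega⟩ j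
    exact ⟨le_of_mul_le_mul_left hpair.1 hk0, le_of_mul_le_mul_left hpair.2 hk0⟩

/-- `Γ_GT` is finitely generated, generated by its elements over the fundamental
weights `ω_i`, and saturated: if `k • γ ∈ Γ_GT` for some `k > 0` and `γ` has dominant
first coordinate, then `γ ∈ Γ_GT`. -/
theorem stmt12 (n : ℕ) (hn : 0 < n) :
    (∃ F : Finset ((Fin (n - 1) → ℤ) × (Fin n → Fin n → ℤ)),
      ↑F ⊆ GammaGT n hn ∧ GammaGT n hn ⊆ ↑(AddSubmonoid.closure (↑F : Set ((Fin (n - 1) → ℤ) × (Fin n → Fin n → ℤ))))) ∧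
    GammaGT n hn ⊆
      ↑(AddSubmonoid.closure
        ({p ∈ GammaGT n hn | ∃ i : Fin (n - 1), p.1 = fun j => if j = i then 1 else 0} :
          Set ((Fin (n - 1) → ℤ) × (Fin n → Fin n → ℤ)))) ∧
    (∀ (k : ℕ) (p : (Fin (n - 1) → ℤ) × (Fin n → Fin n → ℤ)),
      0 < k → (∀ t, 0 ≤ p.1 t) → k • p ∈ GammaGT n hn → p ∈ GammaGT n hn) := by
  refine ⟨⟨(sfund_finite n hn).toFinset, ?_, ?_⟩, ?_, sat n hn⟩
  · rw [Set.Finite.coe_toFinset]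
    exact fun p hp => hp.1
  · rw [Set.Finite.coe_toFinset]
    exact fun p hp => mem_closure_fund n hn (p.2 ⟨0,hn⟩ ⟨0,hn⟩).toNat p hp le_rfl
  · exact fun p hp => mem_closure_fund n hn (p.2 ⟨0,hn⟩ ⟨0,hn⟩).toNat p hp le_rfl
end

section
/- The polytope SP_4(λ) = {x ∈ R^4_{≥0} : x_1 ≤ m_1, x_4 ≤ m_2, 2x_1+x_2+2x_3+2x_4 ≤ 2(m_1+m_2), x_1+x_2+x_3+2x_4 ≤ m_1+2m_2} for Sp_4 with λ = m_1ω_1 + m_2ω_2 has number of lattice points (for integers m_1, m_2 ≥ 0) equal to the Weyl dimension formula value dim V(λ) = (1/6)(m_1+1)(m_2+1)(m_1+m_2+2)(m_1+2m_2+3). -/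
open Finset

private def g (p q : ℕ) : ℕ :=
  ∑ c ∈ range (p + q + 1), (min (2 * (p + q - c)) (p + 2 * q - c) + 1)

private lemma g_zero (p : ℕ) : 2 * g p 0 = (p + 1) * (p + 2) := by
  induction p with
  | zero => simp [g]
  | succ p ih =>
      have step : g (p + 1) 0 = g p 0 + (p + 2) := by
        unfold g
        rw [show p + 1 + 0 + 1 = (p + 0 + 1) + 1 from by ring, Finset.sum_range_succ']
        congr 1
        · apply Finset.sum_congr rfl
          intro c hc
          simp only [Finset.mem_range] at hc
          omega
        · omega
      rw [step, Nat.mul_add, ih]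
      ring

private lemma g_succ (p q : ℕ) : g p (q + 1) = g p q + (2 * (p + q) + 3) := by
  unfold g
  rw [show p + (q + 1) + 1 = (p + q + 1) + 1 from by ring, Finset.sum_range_succ]
  have e1 : ∀ c ∈ range (p + q + 1),
      min (2 * (p + (q + 1) - c)) (p + 2 * (q + 1) - c) + 1
        = (min (2 * (p + q - c)) (p + 2 * q - c) + 1) + 2 := by
    intro c hc
    simp only [Finset.mem_range] at hc
    omega
  rw [Finset.sum_congr rfl e1, Finset.sum_add_distrib]
  simp only [Finset.sum_const, Finset.card_range, smul_eq_mul]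
  omega

private lemma g_closed (p q : ℕ) :
    2 * g p q = (p + 1) * (p + 2) + 4 * q * (p + 1) + 2 * q ^ 2 := by
  induction q with
  | zero => simpa using g_zero p
  | succ q ih =>
      rw [g_succ, Nat.mul_add, ih]
      ring

private def h (p n : ℕ) : ℕ := ∑ q ∈ range (n + 1), g p q

private lemma h_closed (p n : ℕ) :
    6 * h p n = (n + 1) * (3 * (p + 1) * (p + 2) + 6 * n * (p + 1) + n * (2 * n + 1)) := by
  induction n with
  | zero =>
      have : 6 * h p 0 = 3 * (2 * g p 0) := by simp [h]; ring
      rw [this, g_closed]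
      ring
  | succ n ih =>
      have e : 6 * h p (n + 1) = 6 * h p n + 3 * (2 * g p (n + 1)) := by
        simp [h, Finset.sum_range_succ]; ring
      rw [e, ih, g_closed]
      ring

private def N (m1 m2 : ℕ) : ℕ := ∑ p ∈ range (m1 + 1), h p m2

private lemma N_closed (m1 m2 : ℕ) :
    6 * N m1 m2 = (m1 + 1) * (m2 + 1) * (m1 + m2 + 2) * (m1 + 2 * m2 + 3) := by
  induction m1 with
  | zero =>
      have : 6 * N 0 m2 = 6 * h 0 m2 := by simp [N]
      rw [this, h_closed]
      ring
  | succ m1 ih =>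
      have e : 6 * N (m1 + 1) m2 = 6 * N m1 m2 + 6 * h (m1 + 1) m2 := by
        simp [N, Finset.sum_range_succ]; ring
      rw [e, ih, h_closed]
      ring

private def T (m1 m2 : ℕ) : Finset (Σ _ : ℕ, Σ _ : ℕ, Σ _ : ℕ, ℕ) :=
  (range (m1 + 1)).sigma fun p => (range (m2 + 1)).sigma fun q =>
    (range (p + q + 1)).sigma fun c => range (min (2 * (p + q - c)) (p + 2 * q - c) + 1)

private def emb (m1 m2 : ℕ) : (Σ _ : ℕ, Σ _ : ℕ, Σ _ : ℕ, ℕ) → (Fin 4 → ℤ) :=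
  fun t => ![(m1 : ℤ) - t.1, (t.2.2.2 : ℤ), (t.2.2.1 : ℤ), (m2 : ℤ) - t.2.1]

/-- The number of lattice points of the polytope `SP₄(λ)` for `Sp₄`,
`λ = m₁ω₁ + m₂ω₂`, equals the Weyl dimension
`(1/6)(m₁+1)(m₂+1)(m₁+m₂+2)(m₁+2m₂+3)`. -/
theorem stmt17 (m1 m2 : ℕ) :
    Set.ncard {x : Fin 4 → ℤ | (∀ i, 0 ≤ x i) ∧
        x 0 ≤ (m1 : ℤ) ∧ x 3 ≤ (m2 : ℤ) ∧
        2 * x 0 + x 1 + 2 * x 2 + 2 * x 3 ≤ 2 * ((m1 : ℤ) + m2) ∧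
        x 0 + x 1 + x 2 + 2 * x 3 ≤ (m1 : ℤ) + 2 * m2} * 6
      = (m1 + 1) * (m2 + 1) * (m1 + m2 + 2) * (m1 + 2 * m2 + 3) := by
  have hset : {x : Fin 4 → ℤ | (∀ i, 0 ≤ x i) ∧
        x 0 ≤ (m1 : ℤ) ∧ x 3 ≤ (m2 : ℤ) ∧
        2 * x 0 + x 1 + 2 * x 2 + 2 * x 3 ≤ 2 * ((m1 : ℤ) + m2) ∧
        x 0 + x 1 + x 2 + 2 * x 3 ≤ (m1 : ℤ) + 2 * m2}
      = ↑((T m1 m2).image (emb m1 m2)) := by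
    ext x
    simp only [Set.mem_setOf_eq, Finset.coe_image, Set.mem_image, Finset.mem_coe, T,
      Finset.mem_sigma, Finset.mem_range]
    constructor
    · rintro ⟨hpos, h0, h3, h4, h5⟩
      have p0 := hpos 0; have p1 := hpos 1; have p2 := hpos 2; have p3 := hpos 3
      refine ⟨⟨(m1 - x 0).toNat, (m2 - x 3).toNat, (x 2).toNat, (x 1).toNat⟩,
        ⟨?_, ?_, ?_, ?_⟩, ?_⟩
      · dsimp only; omega
      · dsimp only; omega
      · dsimp only; omega
      · dsimp only; omega
      · funext i
        fin_cases i <;> simp [emb] <;> omega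
    · rintro ⟨⟨p, q, c, b⟩, ⟨hp, hq, hc, hb⟩, rfl⟩
      dsimp only at hp hq hc hb
      refine ⟨?_, ?_, ?_, ?_, ?_⟩
      · intro i
        fin_cases i <;> simp [emb] <;> omega
      all_goals simp [emb] <;> omega
  have hinj : Set.InjOn (emb m1 m2) ↑(T m1 m2) := by
    rintro ⟨p, q, c, b⟩ _ ⟨p', q', c', b'⟩ _ he
    have e0 := congrFun he 0
    have e1 := congrFun he 1
    have e2 := congrFun he 2
    have e3 := congrFun he 3
    simp [emb] at e0 e1 e2 e3
    have : p = p' := by omega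
    subst this
    have : q = q' := by omega
    subst this
    have : c = c' := by omega
    subst this
    have : b = b' := by omega
    subst this
    rfl
  have hcard : (T m1 m2).card = N m1 m2 := by
    simp [T, N, h, g, Finset.card_sigma]
  rw [hset, Set.ncard_coe_finset, Finset.card_image_of_injOn hinj, hcard,
    Nat.mul_comm]
  exact N_closed m1 m2
end
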